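/- If ψ ∈ S(ℝⁿ) is nonzero and satisfies Aψ = λψ for some λ ∈ ℂ, then for every nonzero χ ∈ S(ℝᵏ) the function Ψ = T_{Ŝ,χ}ψ belongs to S(ℝ^{n+k}), is nonzero, and satisfies ÃΨ = λΨ; in particular every eigenvalue of A is an eigenvalue of Ã. -/

import Mathlib

open MeasureTheory Complex SchwartzMap
open scoped ComplexConjugate

section Tensor

variable {E F : Type*} [NormedAddCommGroup E] [NormedSpace ℝ E]
  [NormedAddCommGroup F] [NormedSpace ℝ F]
  {tensor : 𝓢(E, ℂ) → 𝓢(F, ℂ) → 𝓢(E × F, ℂ)}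

theorem tensor_ne_zero (htensor : ∀ ψ χ p, tensor ψ χ p = ψ p.1 * χ p.2)
    {ψ : 𝓢(E, ℂ)} {χ : 𝓢(F, ℂ)} (hψ : ψ ≠ 0) (hχ : χ ≠ 0) : tensor ψ χ ≠ 0 := by
  obtain ⟨x, hx⟩ := DFunLike.ne_iff.mp hψ
  obtain ⟨y, hy⟩ := DFunLike.ne_iff.mp hχ
  refine DFunLike.ne_iff.mpr ⟨(x, y), ?_⟩
  simpa [htensor] using And.intro hx hy

theorem tensor_smul_left (htensor : ∀ ψ χ p, tensor ψ χ p = ψ p.1 * χ p.2)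
    (c : ℂ) (ψ : 𝓢(E, ℂ)) (χ : 𝓢(F, ℂ)) : tensor (c • ψ) χ = c • tensor ψ χ := by
  ext p
  simp only [htensor, smul_apply, smul_eq_mul, mul_assoc]

end Tensor

theorem stmt4 (n k : ℕ)
    -- `Ŝ` : a unitary operator mapping `S(ℝ^{n+k})` into itself, together with `Ŝ⁻¹`
    (Sh : 𝓢((Fin n → ℝ) × (Fin k → ℝ), ℂ) ≃L[ℂ] 𝓢((Fin n → ℝ) × (Fin k → ℝ), ℂ))
    -- the tensor product `(ψ ⊗ χ)(x,y) = ψ(x)χ(y)` of Schwartz functions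
    (tensor : 𝓢(Fin n → ℝ, ℂ) → 𝓢(Fin k → ℝ, ℂ) → 𝓢((Fin n → ℝ) × (Fin k → ℝ), ℂ))
    (htensor : ∀ ψ χ p, tensor ψ χ p = ψ p.1 * χ p.2)
    (A : 𝓢(Fin n → ℝ, ℂ) →L[ℂ] 𝓢(Fin n → ℝ, ℂ))
    (Atil : 𝓢((Fin n → ℝ) × (Fin k → ℝ), ℂ) →L[ℂ] 𝓢((Fin n → ℝ) × (Fin k → ℝ), ℂ))
    -- the intertwining relation `Ã ∘ T_{Ŝ,χ} = T_{Ŝ,χ} ∘ A`, where `T_{Ŝ,χ}ψ = Ŝ⁻¹(ψ ⊗ χ)`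
    (hint : ∀ (χ : 𝓢(Fin k → ℝ, ℂ)) (ψ : 𝓢(Fin n → ℝ, ℂ)),
      Atil (Sh.symm (tensor ψ χ)) = Sh.symm (tensor (A ψ) χ))
    (ψ : 𝓢(Fin n → ℝ, ℂ)) (hψ : ψ ≠ 0) (lam : ℂ) (heig : A ψ = lam • ψ)
    (χ : 𝓢(Fin k → ℝ, ℂ)) (hχ : χ ≠ 0) :
    Sh.symm (tensor ψ χ) ≠ 0 ∧
      Atil (Sh.symm (tensor ψ χ)) = lam • Sh.symm (tensor ψ χ) :=
  ⟨(map_ne_zero_iff _ Sh.symm.injective).mpr (tensor_ne_zero htensor hψ hχ), by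
    rw [hint, heig, tensor_smul_left htensor, map_smul]⟩
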